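/- For n ≥ 1, x > 0, and 0 ≤ β < 1, the first Jain moment satisfies ∑_{k=0}^∞ (k/n)·L_{n,k}^{(β)}(x) = x/(1-β). -/

import Mathlib

noncomputable def jainL (n : ℕ) (β x : ℝ) (k : ℕ) : ℝ :=
  n * x * ((n * x + k * β) ^ (k : ℕ) / (n * x + k * β)) / (Nat.factorial k) *
    Real.exp (-(n * x + k * β))

/-!
Put `u = n x`. The Jain weights are the generalized Poisson weights
`u (u + kβ)^(k-1) e^(-(u+kβ)) / k!`, with total mass `G u`, and after the shift `k ↦ k + 1` the
first moment becomes `x F (u + β)`, where `F v = ∑ (v + kβ)^k e^(-(v+kβ)) / k!`.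

Abel's identity `∑ C(n,k) x (x+kz)^(k-1) (y-kz)^(n-k) = (x+y)^n` turns the Cauchy product of the
two series into `G u * F v = F (u + v)`. Hence `F = F 0 * G`, and `G` is multiplicative on
`[0, ∞)`. A geometric majorant gives `F v ≤ C_ε e^(εv)` for every `ε > 0`, and the single term
at `k ≈ v / (1 - β)` together with Stirling gives `F v ≥ c / v`; these two growth bounds force
`G = 1`. (The lower bound is where `β < 1` matters: for `β > 1` the series still converge, but
`G` decays exponentially.) So `F` is a constant `c`, and the termwise identity
`F v = G v + β F (v + β)` gives `c = 1 + β c`.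
-/

open Filter Finset Real
open scoped Nat

noncomputable def abelPoly (z x : ℝ) : ℕ → ℝ
  | 0 => 1
  | k + 1 => x * (x + (k + 1) * z) ^ k

noncomputable def abelSum (z x y : ℝ) (n : ℕ) : ℝ :=
  ∑ k ∈ range (n + 1), n.choose k * abelPoly z x k * (y - k * z) ^ (n - k)

lemma alternating_sum_choose_mul_pow_eq_zero (n : ℕ) (x z : ℝ) :
    ∑ k ∈ range (n + 2), (-1 : ℝ) ^ (n + 1 - k) * (n + 1).choose k * (x + k * z) ^ n = 0 := by
  have hdeg : ((Polynomial.C z * Polynomial.X + Polynomial.C x) ^ n).natDegree < n + 1 :=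
    Nat.lt_succ_of_le <| (Polynomial.natDegree_pow_le_of_le n Polynomial.natDegree_linear_le).trans
      (mul_one n).le
  have h := congrFun (Polynomial.fwdDiff_iter_eq_zero_of_degree_lt hdeg) 0
  rw [fwdDiff_iter_eq_sum_shift] at h
  simpa [add_comm x, mul_comm z] using h

lemma abelPoly_mul_neg_pow (z x : ℝ) {n k : ℕ} (hk : k ≤ n + 1) :
    abelPoly z x k * (-x - k * z) ^ (n + 1 - k) = (-1) ^ (n + 1 - k) * x * (x + k * z) ^ n := by
  rw [show -x - k * z = -1 * (x + k * z) by ring, mul_pow]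
  cases k with
  | zero => simp [abelPoly]; ring
  | succ j =>
    obtain ⟨d, rfl⟩ := Nat.exists_eq_add_of_le (Nat.le_of_succ_le_succ hk)
    rw [abelPoly, show j + d + 1 - (j + 1) = d by omega, pow_add]
    push_cast
    ring

lemma abelSum_neg (z x : ℝ) (n : ℕ) : abelSum z x (-x) (n + 1) = 0 := by
  calc abelSum z x (-x) (n + 1) = x * ∑ k ∈ range (n + 2),
        (-1 : ℝ) ^ (n + 1 - k) * (n + 1).choose k * (x + k * z) ^ n := by
        rw [abelSum, mul_sum]
        refine sum_congr rfl fun k hk ↦ ?_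
        rw [mul_assoc, abelPoly_mul_neg_pow z x (mem_range_succ_iff.mp hk)]
        ring
    _ = 0 := by rw [alternating_sum_choose_mul_pow_eq_zero, mul_zero]

lemma hasDerivAt_abelSum (z x y : ℝ) (n : ℕ) :
    HasDerivAt (fun y ↦ abelSum z x y (n + 1)) ((n + 1) * abelSum z x y n) y := by
  have hterm : ∀ k ∈ range (n + 2), HasDerivAt
      (fun y ↦ (n + 1).choose k * abelPoly z x k * (y - k * z) ^ (n + 1 - k))
      ((n + 1).choose k * abelPoly z x k * (((n + 1 - k : ℕ) : ℝ) * (y - k * z) ^ (n - k))) y :=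
    fun k _ ↦ by
      simpa [Nat.sub_sub, add_comm 1 k, Nat.add_sub_add_right] using
        (((hasDerivAt_id y).sub_const (k * z)).pow (n + 1 - k)).const_mul
          ((n + 1).choose k * abelPoly z x k)
  refine (HasDerivAt.fun_sum hterm).congr_deriv ?_
  rw [sum_range_succ, Nat.sub_self, Nat.cast_zero, zero_mul, mul_zero, add_zero, abelSum, mul_sum]
  refine sum_congr rfl fun k _ ↦ ?_
  have hchoose : ((n + 1).choose k : ℝ) * ((n + 1 - k : ℕ) : ℝ) = n.choose k * (n + 1) := by
    exact_mod_cast (Nat.choose_mul_succ_eq n k).symm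
  linear_combination (abelPoly z x k * (y - k * z) ^ (n - k)) * hchoose

theorem abel_identity (z x y : ℝ) (n : ℕ) : abelSum z x y n = (x + y) ^ n := by
  induction n generalizing y with
  | zero => simp [abelSum, abelPoly]
  | succ n ih =>
    have hD : ∀ y, HasDerivAt (fun y ↦ abelSum z x y (n + 1) - (x + y) ^ (n + 1)) 0 y :=
      fun y ↦ by
        simpa [ih] using
          (hasDerivAt_abelSum z x y n).fun_sub (((hasDerivAt_id y).const_add x).fun_pow (n + 1))
    have hconst := is_const_of_deriv_eq_zero (fun y ↦ (hD y).differentiableAt)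
      (fun y ↦ (hD y).deriv) y (-x)
    rw [abelSum_neg, add_neg_cancel, zero_pow (Nat.succ_ne_zero n), sub_zero] at hconst
    linarith

lemma le_one_of_forall_pow_le {q C : ℝ} (h : ∀ m : ℕ, q ^ (m + 1) ≤ C) : q ≤ 1 := by
  by_contra! hq
  obtain ⟨m, hm⟩ := pow_unbounded_of_one_lt C hq
  have : q ^ m ≤ q ^ (m + 1) := pow_le_pow_right₀ hq.le (Nat.le_succ m)
  linarith [h m]

theorem eq_one_of_map_add_eq_mul {g : ℝ → ℝ}
    (hmul : ∀ u v, 0 ≤ u → 0 ≤ v → g (u + v) = g u * g v)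
    (hup : ∀ ε > 0, ∃ C, ∀ v, 0 ≤ v → g v ≤ C * exp (ε * v))
    (hlow : ∃ C > 0, ∀ v, 1 ≤ v → C / v ≤ g v) {u : ℝ} (hu : 0 < u) : g u = 1 := by
  have hpow : ∀ m : ℕ, g ((m + 1) * u) = g u ^ (m + 1) := by
    intro m
    induction m with
    | zero => simp
    | succ m ih =>
      rw [pow_succ, ← ih, ← hmul _ _ (by positivity) hu.le]
      push_cast
      ring_nf
  have hnonneg : 0 ≤ g u := by
    have h := hmul (u / 2) (u / 2) (by positivity) (by positivity)
    rw [add_halves] at h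
    exact h ▸ mul_self_nonneg _
  refine le_antisymm (le_of_forall_gt_imp_ge_of_dense fun r hr ↦ ?_) ?_
  · obtain ⟨C, hC⟩ := hup (log r / u) (div_pos (log_pos hr) hu)
    have hr0 : 0 < r := by linarith
    have h := le_one_of_forall_pow_le (q := g u / r) (C := C) fun m ↦ by
      rw [div_pow, div_le_iff₀ (by positivity), ← hpow]
      calc g ((m + 1) * u) ≤ C * exp (log r / u * ((m + 1) * u)) := hC _ (by positivity)
        _ = C * r ^ (m + 1) := by
          rw [show log r / u * ((m + 1) * u) = (m + 1 : ℕ) * log r by field_simp; push_cast; ring,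
            exp_nat_mul, exp_log hr0]
    rwa [div_le_one hr0] at h
  · obtain ⟨C, hC0, hC⟩ := hlow
    by_contra! hq
    have hlim := (tendsto_add_atTop_iff_nat 1).mpr (tendsto_self_mul_const_pow_of_lt_one hnonneg hq)
    push_cast at hlim
    have hev : ∀ᶠ m : ℕ in atTop, C / u ≤ ((m : ℝ) + 1) * g u ^ (m + 1) := by
      filter_upwards [eventually_ge_atTop ⌈1 / u⌉₊] with m hm
      have hmu : 1 ≤ (m + 1 : ℝ) * u := by
        have h := Nat.ceil_le.mp hm
        rw [div_le_iff₀ hu] at h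
        nlinarith
      rw [← hpow]
      calc C / u = (m + 1) * (C / ((m + 1) * u)) := by field_simp
        _ ≤ _ := by gcongr; exact hC _ hmu
    exact absurd (ge_of_tendsto hlim hev) (not_le.mpr (div_pos hC0 hu))

lemma factorial_le_stirling {K : ℕ} (hK : 0 < K) : (K ! : ℝ) ≤ exp 1 * √K * (K / exp 1) ^ K := by
  obtain ⟨n, rfl⟩ := Nat.exists_eq_succ_of_ne_zero hK.ne'
  have h := Stirling.stirlingSeq'_antitone (Nat.zero_le n)
  simp only [Function.comp, Stirling.stirlingSeq] at h
  rw [div_le_div_iff₀ (by positivity) (by positivity), Real.sqrt_mul zero_le_two] at h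
  norm_num at h
  rw [← mul_le_mul_iff_of_pos_right (by positivity : (0 : ℝ) < √2 * (exp 1)⁻¹)]
  convert h using 1
  push_cast
  field_simp

lemma exp_mul_div_one_add_lt_one {ε β : ℝ} (hε : 0 < ε) (h : ε * β < 1 - β) :
    exp (ε * β) / (1 + ε) < 1 := by
  have hpos : 0 < 1 - ε * β := by nlinarith
  have hexp : exp (ε * β) * (1 - ε * β) ≤ 1 := by
    calc exp (ε * β) * (1 - ε * β) ≤ exp (ε * β) * exp (-(ε * β)) := by
          gcongr; linarith [add_one_le_exp (-(ε * β))]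
      _ = 1 := by rw [← exp_add, add_neg_cancel, exp_zero]
  have : 1 < (1 + ε) * (1 - ε * β) := by nlinarith
  rw [div_lt_one (by linarith)]
  nlinarith [exp_pos (ε * β)]

noncomputable def poissonShift (β v : ℝ) (k : ℕ) : ℝ := (v + k * β) ^ k * exp (-(v + k * β)) / k !

/-- For `u = n x > 0` and `β ≥ 0` this is `jainL n β x k`. -/
noncomputable def genPoisson (β u : ℝ) (k : ℕ) : ℝ := abelPoly β u k * exp (-(u + k * β)) / k !

lemma sum_genPoisson_mul_poissonShift (β u v : ℝ) (n : ℕ) :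
    ∑ k ∈ range (n + 1), genPoisson β u k * poissonShift β v (n - k) = poissonShift β (u + v) n := by
  have hterm : ∀ k ∈ range (n + 1), genPoisson β u k * poissonShift β v (n - k) =
      exp (-(u + v + n * β)) / n ! *
        (n.choose k * abelPoly β u k * ((v + n * β) - k * β) ^ (n - k)) := by
    intro k hk
    have hkn := mem_range_succ_iff.mp hk
    have hfac : (n ! : ℝ) = n.choose k * k ! * (n - k)! := by
      exact_mod_cast (Nat.choose_mul_factorial_mul_factorial hkn).symm
    have hchoose : (n.choose k : ℝ) ≠ 0 := by exact_mod_cast (Nat.choose_pos hkn).ne'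
    have hexp : exp (-(u + k * β)) * exp (-(v + (n - k) * β)) = exp (-(u + v + n * β)) := by
      rw [← exp_add]; ring_nf
    unfold genPoisson poissonShift
    rw [hfac, Nat.cast_sub hkn, ← hexp]
    field_simp
    ring
  rw [sum_congr rfl hterm, ← mul_sum, ← abelSum, abel_identity]
  unfold poissonShift
  ring_nf

lemma poissonShift_succ_sub_genPoisson_succ (β v : ℝ) (k : ℕ) :
    poissonShift β v (k + 1) - genPoisson β v (k + 1) = β * poissonShift β (v + β) k := by
  unfold poissonShift genPoisson
  rw [abelPoly, Nat.factorial_succ, show v + β + k * β = v + (k + 1 : ℕ) * β by push_cast; ring]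
  push_cast
  field_simp
  ring

lemma poissonShift_zero_eq_genPoisson_zero (β v : ℝ) : poissonShift β v 0 = genPoisson β v 0 := by
  simp [poissonShift, genPoisson, abelPoly]

section

variable {β : ℝ}

lemma poissonShift_nonneg (hβ : 0 ≤ β) {v : ℝ} (hv : 0 ≤ v) (k : ℕ) : 0 ≤ poissonShift β v k := by
  unfold poissonShift; positivity

lemma abelPoly_nonneg (hβ : 0 ≤ β) {u : ℝ} (hu : 0 ≤ u) (k : ℕ) : 0 ≤ abelPoly β u k := by
  cases k <;> simp only [abelPoly] <;> positivity

lemma abelPoly_le_pow (hβ : 0 ≤ β) {u : ℝ} (hu : 0 ≤ u) (k : ℕ) :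
    abelPoly β u k ≤ (u + k * β) ^ k := by
  cases k with
  | zero => simp [abelPoly]
  | succ k =>
    rw [abelPoly, pow_succ', Nat.cast_succ]
    gcongr
    nlinarith

lemma genPoisson_nonneg (hβ : 0 ≤ β) {u : ℝ} (hu : 0 ≤ u) (k : ℕ) : 0 ≤ genPoisson β u k := by
  unfold genPoisson; have := abelPoly_nonneg hβ hu k; positivity

lemma genPoisson_le_poissonShift (hβ : 0 ≤ β) {u : ℝ} (hu : 0 ≤ u) (k : ℕ) :
    genPoisson β u k ≤ poissonShift β u k := by
  unfold genPoisson poissonShift; gcongr; exact abelPoly_le_pow hβ hu k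

lemma poissonShift_le_geometric (hβ : 0 ≤ β) {v ε : ℝ} (hv : 0 ≤ v) (hε : 0 ≤ ε) (k : ℕ) :
    poissonShift β v k ≤ exp (ε * v) * (exp (ε * β) / (1 + ε)) ^ k := by
  have hs : 0 ≤ v + k * β := by positivity
  have key := pow_div_factorial_le_exp ((1 + ε) * (v + k * β)) (by positivity) k
  rw [mul_pow, mul_div_assoc, ← le_div_iff₀' (by positivity)] at key
  calc poissonShift β v k = (v + k * β) ^ k / k ! * exp (-(v + k * β)) := by
        unfold poissonShift; ring
    _ ≤ exp ((1 + ε) * (v + k * β)) / (1 + ε) ^ k * exp (-(v + k * β)) := by gcongr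
    _ = exp (ε * v) * (exp (ε * β) / (1 + ε)) ^ k := by
        rw [div_pow, ← exp_nat_mul, div_mul_eq_mul_div, ← exp_add, mul_div_assoc', ← exp_add]
        ring_nf

lemma div_le_poissonShift_floor (hβ0 : 0 ≤ β) (hβ1 : β < 1) {v : ℝ} (hv : 1 ≤ v) :
    exp (-2) * (1 - β) / v ≤ poissonShift β v ⌊v / (1 - β)⌋₊ := by
  set K := ⌊v / (1 - β)⌋₊
  have h1β : 0 < 1 - β := by linarith
  have hK1 : (1 : ℝ) ≤ K := by
    exact_mod_cast (Nat.one_le_floor_iff _).mpr ((one_le_div h1β).mpr (by linarith))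
  have hKle : K * (1 - β) ≤ v := (le_div_iff₀ h1β).mp (Nat.floor_le (by positivity))
  have hKlt : v < (K + 1) * (1 - β) := (div_lt_iff₀ h1β).mp (Nat.lt_floor_add_one _)
  have hsqrt : √(K : ℝ) ≤ K := Real.sqrt_le_self_iff.mpr (Or.inr hK1)
  -- `K` is chosen so that `K ≤ v + K β ≤ K + 1`.
  calc exp (-2) * (1 - β) / v ≤ exp (-2) / K := by
        rw [div_le_div_iff₀ (by linarith) (by linarith)]
        nlinarith [exp_pos (-2)]
    _ ≤ exp (-2) / √K := by gcongr
    _ = K ^ K * exp (-(K + 1)) / (exp 1 * √K * (K / exp 1) ^ K) := by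
        have hexp : exp (-(K + 1)) = exp (-2) * exp 1 / exp 1 ^ K := by
          rw [eq_div_iff (by positivity), ← exp_nat_mul, ← exp_add, ← exp_add]
          ring_nf
        rw [hexp, div_pow]
        field_simp
    _ ≤ (v + K * β) ^ K * exp (-(v + K * β)) / K ! := by
        have hpow : (K : ℝ) ^ K ≤ (v + K * β) ^ K := pow_le_pow_left₀ (by positivity) (by linarith) K
        have hexp : exp (-(K + 1)) ≤ exp (-(v + K * β)) := exp_le_exp.mpr (by linarith)
        exact div_le_div₀ (by positivity) (mul_le_mul hpow hexp (by positivity) (by positivity))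
          (by positivity) (factorial_le_stirling (Nat.one_le_cast.mp hK1))

end

section

variable {β : ℝ} (hβ0 : 0 ≤ β) (hβ1 : β < 1)
include hβ0 hβ1

lemma summable_poissonShift {v : ℝ} (hv : 0 ≤ v) : Summable (poissonShift β v) := by
  have hε : 0 < 1 - β := by linarith
  exact .of_nonneg_of_le (poissonShift_nonneg hβ0 hv) (poissonShift_le_geometric hβ0 hv hε.le)
    (.mul_left _ (summable_geometric_of_lt_one (by positivity)
      (exp_mul_div_one_add_lt_one hε (by nlinarith))))

lemma summable_genPoisson {u : ℝ} (hu : 0 ≤ u) : Summable (genPoisson β u) :=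
  .of_nonneg_of_le (genPoisson_nonneg hβ0 hu) (genPoisson_le_poissonShift hβ0 hu)
    (summable_poissonShift hβ0 hβ1 hu)

lemma exists_tsum_poissonShift_le_mul_exp {ε : ℝ} (hε : 0 < ε) :
    ∃ C, ∀ v, 0 ≤ v → ∑' k, poissonShift β v k ≤ C * exp (ε * v) := by
  set δ := min ε (1 - β)
  have hδ : 0 < δ := lt_min hε (by linarith)
  set r := exp (δ * β) / (1 + δ)
  have hr0 : 0 ≤ r := by positivity
  have hr1 : r < 1 := exp_mul_div_one_add_lt_one hδ (by nlinarith [min_le_right ε (1 - β)])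
  refine ⟨(1 - r)⁻¹, fun v hv ↦ ?_⟩
  calc ∑' k, poissonShift β v k ≤ ∑' k : ℕ, exp (δ * v) * r ^ k :=
        (summable_poissonShift hβ0 hβ1 hv).tsum_le_tsum (poissonShift_le_geometric hβ0 hv hδ.le)
          (.mul_left _ (summable_geometric_of_lt_one hr0 hr1))
    _ = (1 - r)⁻¹ * exp (δ * v) := by rw [tsum_mul_left, tsum_geometric_of_lt_one hr0 hr1, mul_comm]
    _ ≤ (1 - r)⁻¹ * exp (ε * v) := by
        have : 0 < 1 - r := by linarith
        gcongr
        exact min_le_left _ _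

lemma div_le_tsum_poissonShift {v : ℝ} (hv : 1 ≤ v) :
    exp (-2) * (1 - β) / v ≤ ∑' k, poissonShift β v k :=
  (div_le_poissonShift_floor hβ0 hβ1 hv).trans <|
    (summable_poissonShift hβ0 hβ1 (by linarith)).le_tsum _
      fun k _ ↦ poissonShift_nonneg hβ0 (by linarith) k

lemma tsum_genPoisson_mul_tsum_poissonShift {u v : ℝ} (hu : 0 ≤ u) (hv : 0 ≤ v) :
    (∑' k, genPoisson β u k) * ∑' k, poissonShift β v k = ∑' k, poissonShift β (u + v) k := by
  have hg : Summable fun k ↦ ‖genPoisson β u k‖ := by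
    simpa only [norm_of_nonneg (genPoisson_nonneg hβ0 hu _)] using summable_genPoisson hβ0 hβ1 hu
  have hf : Summable fun k ↦ ‖poissonShift β v k‖ := by
    simpa only [norm_of_nonneg (poissonShift_nonneg hβ0 hv _)] using
      summable_poissonShift hβ0 hβ1 hv
  rw [tsum_mul_tsum_eq_tsum_sum_range_of_summable_norm hg hf]
  simp_rw [sum_genPoisson_mul_poissonShift]

lemma tsum_poissonShift_eq_tsum_genPoisson_add {v : ℝ} (hv : 0 ≤ v) :
    ∑' k, poissonShift β v k = ∑' k, genPoisson β v k + β * ∑' k, poissonShift β (v + β) k := by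
  have hdiff : HasSum (fun k ↦ poissonShift β v k - genPoisson β v k)
      (β * ∑' k, poissonShift β (v + β) k) := by
    rw [← hasSum_nat_add_iff' 1]
    simpa [poissonShift_succ_sub_genPoisson_succ, poissonShift_zero_eq_genPoisson_zero] using
      (summable_poissonShift hβ0 hβ1 (by positivity)).hasSum.mul_left β
  simpa using ((summable_genPoisson hβ0 hβ1 hv).hasSum.add hdiff).tsum_eq

lemma tsum_poissonShift_eq_tsum_genPoisson_mul {v : ℝ} (hv : 0 ≤ v) :
    ∑' k, poissonShift β v k = (∑' k, genPoisson β v k) * ∑' k, poissonShift β 0 k := by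
  simpa using (tsum_genPoisson_mul_tsum_poissonShift hβ0 hβ1 hv le_rfl).symm

lemma one_le_tsum_poissonShift_zero : 1 ≤ ∑' k, poissonShift β 0 k := by
  simpa [poissonShift] using (summable_poissonShift hβ0 hβ1 le_rfl).le_tsum 0
    fun k _ ↦ poissonShift_nonneg hβ0 le_rfl k

lemma tsum_genPoisson_add {u v : ℝ} (hu : 0 ≤ u) (hv : 0 ≤ v) :
    ∑' k, genPoisson β (u + v) k = (∑' k, genPoisson β u k) * ∑' k, genPoisson β v k := by
  have hc : ∑' k, poissonShift β 0 k ≠ 0 := by linarith [one_le_tsum_poissonShift_zero hβ0 hβ1]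
  refine mul_right_cancel₀ hc ?_
  rw [← tsum_poissonShift_eq_tsum_genPoisson_mul hβ0 hβ1 (add_nonneg hu hv),
    ← tsum_genPoisson_mul_tsum_poissonShift hβ0 hβ1 hu hv,
    tsum_poissonShift_eq_tsum_genPoisson_mul hβ0 hβ1 hv, mul_assoc]

theorem tsum_genPoisson_eq_one {u : ℝ} (hu : 0 < u) : ∑' k, genPoisson β u k = 1 := by
  set c := ∑' k, poissonShift β 0 k
  have hc : 0 < c := by linarith [one_le_tsum_poissonShift_zero hβ0 hβ1]
  have h1β : 0 < 1 - β := by linarith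
  refine eq_one_of_map_add_eq_mul (g := fun u ↦ ∑' k, genPoisson β u k)
    (fun u v hu hv ↦ tsum_genPoisson_add hβ0 hβ1 hu hv) (fun ε hε ↦ ?_)
    ⟨exp (-2) * (1 - β) / c, by positivity, fun v hv ↦ ?_⟩ hu
  · obtain ⟨C, hC⟩ := exists_tsum_poissonShift_le_mul_exp hβ0 hβ1 hε
    refine ⟨C, fun v hv ↦ le_trans ?_ (hC v hv)⟩
    exact (summable_genPoisson hβ0 hβ1 hv).tsum_le_tsum (genPoisson_le_poissonShift hβ0 hv)
      (summable_poissonShift hβ0 hβ1 hv)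
  · have hF := div_le_tsum_poissonShift hβ0 hβ1 hv
    rw [tsum_poissonShift_eq_tsum_genPoisson_mul hβ0 hβ1 (by linarith)] at hF
    rw [div_div, mul_comm c v, ← div_div, div_le_iff₀ hc]
    exact hF

theorem tsum_poissonShift_eq_inv {v : ℝ} (hv : 0 < v) : ∑' k, poissonShift β v k = (1 - β)⁻¹ := by
  set c := ∑' k, poissonShift β 0 k
  have hconst : ∀ w, 0 < w → ∑' k, poissonShift β w k = c := fun w hw ↦ by
    rw [tsum_poissonShift_eq_tsum_genPoisson_mul hβ0 hβ1 hw.le, tsum_genPoisson_eq_one hβ0 hβ1 hw,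
      one_mul]
  have h := tsum_poissonShift_eq_tsum_genPoisson_add hβ0 hβ1 zero_le_one
  rw [hconst 1 one_pos, tsum_genPoisson_eq_one hβ0 hβ1 one_pos, hconst (1 + β) (by linarith)] at h
  rw [hconst v hv]
  exact eq_inv_of_mul_eq_one_left (by linarith)

end

lemma succ_div_mul_jainL_succ {n : ℕ} (hn : 0 < n) {x β : ℝ} (hx : 0 < x) (hβ : 0 ≤ β) (k : ℕ) :
    ((k + 1 : ℕ) / n : ℝ) * jainL n β x (k + 1) = x * poissonShift β (n * x + β) k := by
  have hpos : 0 < n * x + (k + 1 : ℕ) * β := by positivity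
  unfold jainL poissonShift
  rw [show n * x + β + k * β = n * x + (k + 1 : ℕ) * β by push_cast; ring, pow_succ,
    mul_div_cancel_right₀ _ hpos.ne', Nat.factorial_succ]
  push_cast
  field_simp

theorem jain_first_moment (n : ℕ) (hn : 1 ≤ n) (x β : ℝ)
    (hx : 0 < x) (hβ0 : 0 ≤ β) (hβ1 : β < 1) :
    HasSum (fun k : ℕ => (k / n : ℝ) * jainL n β x k) (x / (1 - β)) := by
  have hv : 0 < n * x + β := by positivity
  have hsum := (summable_poissonShift hβ0 hβ1 hv.le).hasSum.mul_left x
  rw [tsum_poissonShift_eq_inv hβ0 hβ1 hv, ← div_eq_mul_inv] at hsum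
  rw [← hasSum_nat_add_iff' 1]
  simp only [succ_div_mul_jainL_succ hn hx hβ0]
  rwa [sum_range_one, Nat.cast_zero, zero_div, zero_mul, sub_zero]
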